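/- (Recurrence for connected labelled graphs) Let C_k denote the number of connected labelled simple graphs on k vertices. Then for every p ≥ 1, C_p = 2^{binom(p,2)} − (1/p) · Σ_{k=1}^{p−1} k · binom(p,k) · 2^{binom(p−k,2)} · C_k; equivalently, in division-free form, p · 2^{binom(p,2)} = Σ_{k=1}^{p} k · binom(p,k) · 2^{binom(p−k,2)} · C_k. -/

import Mathlib

open scoped Classical in
/-- `connectedLabelledGraphCount k` is the number of connected labelled simple graphs
on `k` vertices. -/
noncomputable def connectedLabelledGraphCount (k : ℕ) : ℕ :=
  Fintype.card {G : SimpleGraph (Fin k) // G.Connected}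

/-!
Count the pairs `(v, G)` of a vertex `v` and a graph `G` on `Fin p` in two ways. Sorting the graphs
by the vertex set `S` of the component of `v`, a graph with a given `S` is a connected graph on `S`
together with an arbitrary graph on the complement, so for each `v` we get
`2 ^ (p.choose 2) = ∑_{S ∋ v} C_{|S|} * 2 ^ ((p - |S|).choose 2)`. Summing over `v`, every `S`
is counted `|S|` times, and there are `p.choose k` sets of size `k`.
-/

open Finset

namespace SimpleGraph

def edgeSetEquiv (V : Type*) : SimpleGraph V ≃ Set ↥(Sym2.diagSet (α := V))ᶜ where
  toFun G := Subtype.val ⁻¹' G.edgeSet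
  invFun t := fromEdgeSet (Subtype.val '' t)
  left_inv G := by
    simp only [Subtype.image_preimage_coe,
      Set.inter_eq_right.mpr G.edgeSet_subset_compl_diagSet, fromEdgeSet_edgeSet]
  right_inv t := by
    ext e
    simp [edgeSet_fromEdgeSet]

variable {V : Type*}

theorem natCard_eq_two_pow_choose_two [Finite V] :
    Nat.card (SimpleGraph V) = 2 ^ (Nat.card V).choose 2 := by
  classical
  have := Fintype.ofFinite V
  rw [Nat.card_congr (edgeSetEquiv V), Nat.card_eq_fintype_card, Fintype.card_set,
    ← Nat.card_eq_fintype_card, Nat.card_coe_set_eq, Sym2.ncard_diagSet_compl]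

theorem natCard_connected_eq_connectedLabelledGraphCount [Finite V] :
    Nat.card {G : SimpleGraph V // G.Connected} = connectedLabelledGraphCount (Nat.card V) := by
  classical
  rw [connectedLabelledGraphCount, ← Nat.card_eq_fintype_card]
  exact Nat.card_congr <| (Finite.equivFin V).simpleGraph.subtypeEquiv fun G ↦
    (Iso.connected_iff ⟨Finite.equivFin V, by simp⟩)

section Glue

def glue (s : Set V) (H : SimpleGraph s) (K : SimpleGraph ↥sᶜ) : SimpleGraph V where
  Adj a b := (∃ (ha : a ∈ s) (hb : b ∈ s), H.Adj ⟨a, ha⟩ ⟨b, hb⟩) ∨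
    ∃ (ha : a ∈ sᶜ) (hb : b ∈ sᶜ), K.Adj ⟨a, ha⟩ ⟨b, hb⟩
  symm := ⟨fun _ _ ↦ by
    rintro (⟨ha, hb, h⟩ | ⟨ha, hb, h⟩)
    exacts [Or.inl ⟨hb, ha, h.symm⟩, Or.inr ⟨hb, ha, h.symm⟩]⟩
  loopless := ⟨fun _ ↦ by
    rintro (⟨_, _, h⟩ | ⟨_, _, h⟩)
    exacts [H.irrefl h, K.irrefl h]⟩

variable {s : Set V} (H : SimpleGraph s) (K : SimpleGraph ↥sᶜ)

theorem Walk.mem_of_glue_of_mem {a b : V} (p : (glue s H K).Walk a b) (ha : a ∈ s) : b ∈ s := by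
  induction p with
  | nil => exact ha
  | cons h _ ih =>
    rcases h with ⟨-, hb, -⟩ | ⟨ha', -, -⟩
    exacts [ih hb, absurd ha ha']

@[simp]
theorem induce_glue_left : (glue s H K).induce s = H := by
  ext ⟨a, ha⟩ ⟨b, hb⟩
  simp [glue, ha, hb]

@[simp]
theorem induce_glue_right : (glue s H K).induce sᶜ = K := by
  ext ⟨a, ha⟩ ⟨b, hb⟩
  rw [Set.mem_compl_iff] at ha hb
  simp [glue, ha, hb]

theorem glue_induce {G : SimpleGraph V} (h : ∀ a b, G.Adj a b → a ∈ s → b ∈ s) :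
    glue s (G.induce s) (G.induce sᶜ) = G := by
  ext a b
  refine ⟨by rintro (⟨_, _, hab⟩ | ⟨_, _, hab⟩) <;> exact hab, fun hab ↦ ?_⟩
  by_cases ha : a ∈ s
  · exact Or.inl ⟨ha, h a b hab ha, hab⟩
  · exact Or.inr ⟨ha, fun hb ↦ ha (h b a hab.symm hb), hab⟩

theorem supp_connectedComponentMk_glue {v : V} (hv : v ∈ s) (hH : H.Connected) :
    ((glue s H K).connectedComponentMk v).supp = s := by
  ext x
  simp only [ConnectedComponent.mem_supp_iff, ConnectedComponent.eq]
  exact ⟨fun ⟨p⟩ ↦ p.reverse.mem_of_glue_of_mem H K hv, fun hx ↦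
    (hH.preconnected ⟨x, hx⟩ ⟨v, hv⟩).map ⟨Subtype.val, fun h ↦ Or.inl ⟨_, _, h⟩⟩⟩

end Glue

noncomputable def componentSuppEquiv {s : Set V} {v : V} (hv : v ∈ s) :
    {G : SimpleGraph V // (G.connectedComponentMk v).supp = s} ≃
      {H : SimpleGraph s // H.Connected} × SimpleGraph ↥sᶜ where
  toFun G := (⟨G.1.induce s, by
    obtain ⟨G, rfl⟩ := G
    exact (G.connectedComponentMk v).connected_toSimpleGraph⟩, G.1.induce sᶜ)
  invFun HK := ⟨glue s HK.1 HK.2, supp_connectedComponentMk_glue _ _ hv HK.1.2⟩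
  left_inv G := Subtype.ext <| glue_induce fun a b hab ha ↦ by
    rw [← G.2] at ha ⊢
    exact ConnectedComponent.mem_supp_of_adj_mem_supp _ ha hab
  right_inv HK := by simp

theorem natCard_supp_connectedComponentMk_eq [Finite V] {s : Set V} {v : V} (hv : v ∈ s) :
    Nat.card {G : SimpleGraph V // (G.connectedComponentMk v).supp = s} =
      connectedLabelledGraphCount s.ncard * 2 ^ (Nat.card V - s.ncard).choose 2 := by
  rw [Nat.card_congr (componentSuppEquiv hv), Nat.card_prod,
    natCard_connected_eq_connectedLabelledGraphCount, natCard_eq_two_pow_choose_two,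
    Nat.card_coe_set_eq, Nat.card_coe_set_eq, Set.ncard_compl]

end SimpleGraph

theorem Finset.sum_sum_filter_mem {α M : Type*} [Fintype α] [DecidableEq α] [AddCommMonoid M]
    (g : Finset α → M) : ∑ a, ∑ S with a ∈ S, g S = ∑ S, #S • g S := by
  simp_rw [sum_filter]
  rw [sum_comm]
  simp

open SimpleGraph in
theorem two_pow_choose_two_eq_sum_connectedLabelledGraphCount {V : Type*} [Fintype V]
    [DecidableEq V] (v : V) :
    2 ^ (Fintype.card V).choose 2 =
      ∑ S : Finset V with v ∈ S,
        connectedLabelledGraphCount #S * 2 ^ (Fintype.card V - #S).choose 2 := by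
  classical
  let supp (G : SimpleGraph V) : Finset V := (G.connectedComponentMk v).supp.toFinset
  have fiber (S : Finset V) : Nat.card {G // supp G = S} =
      if v ∈ S then connectedLabelledGraphCount #S * 2 ^ (Nat.card V - #S).choose 2
      else 0 := by
    have hS : Nat.card {G // supp G = S} =
        Nat.card {G : SimpleGraph V // (G.connectedComponentMk v).supp = S} :=
      Nat.card_congr <| Equiv.subtypeEquivRight fun G ↦ by
        rw [← Finset.coe_inj, Set.coe_toFinset]
    split_ifs with hv
    · rw [hS, natCard_supp_connectedComponentMk_eq (by simpa using hv), Set.ncard_coe_finset]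
    · have : IsEmpty {G // supp G = S} := ⟨fun ⟨G, hG⟩ ↦ hv (by simp [← hG, supp])⟩
      exact Nat.card_of_isEmpty
  rw [← Nat.card_eq_fintype_card, ← natCard_eq_two_pow_choose_two, sum_filter,
    Nat.card_congr (Equiv.sigmaFiberEquiv supp).symm, Nat.card_sigma]
  exact sum_congr rfl fun S _ ↦ fiber S

theorem recurrence_connected_labelled_graphs_general (p : ℕ) :
    p * 2 ^ p.choose 2 =
      ∑ k ∈ Finset.Icc 1 p,
        k * p.choose k * 2 ^ (p - k).choose 2 * connectedLabelledGraphCount k := by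
  let g (k : ℕ) : ℕ := connectedLabelledGraphCount k * 2 ^ (p - k).choose 2
  calc p * 2 ^ p.choose 2 = ∑ v : Fin p, 2 ^ p.choose 2 := by simp
    _ = ∑ v : Fin p, ∑ S : Finset (Fin p) with v ∈ S, g #S := sum_congr rfl fun v _ ↦ by
        simpa using two_pow_choose_two_eq_sum_connectedLabelledGraphCount v
    _ = ∑ S : Finset (Fin p), #S * g #S := sum_sum_filter_mem _
    _ = ∑ k ∈ range (p + 1), p.choose k * (k * g k) := by
        rw [← powerset_univ, sum_powerset_apply_card (fun k ↦ k * g k)]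
        simp
    _ = _ := by
        rw [range_eq_Ico, sum_eq_sum_Ico_succ_bot (by omega), zero_add,
          Ico_add_one_right_eq_Icc, zero_mul, mul_zero, zero_add]
        exact sum_congr rfl fun k _ ↦ by ring

theorem recurrence_connected_labelled_graphs (p : ℕ) (hp : 1 ≤ p) :
    p * 2 ^ p.choose 2 =
      ∑ k ∈ Finset.Icc 1 p,
        k * p.choose k * 2 ^ (p - k).choose 2 * connectedLabelledGraphCount k :=
  recurrence_connected_labelled_graphs_general p
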